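/- The map t ↦ t̂ preserves provable equality: for all terms t, t' of T in the same context, if T ⊢ t = t' then T ⊢ t̂ = t̂'. -/

import Mathlib

/-- Terms of the theory `T`: unary symbols `g x` for each letter `x` of the alphabet `Fin N`,
an extra unary symbol `al` (written α), and a binary symbol `m`, in context `x_1, ..., x_n`. -/
inductive TmT (N : ℕ) : ℕ → Type
  | var {n} : Fin n → TmT N n
  | g {n} : Fin N → TmT N n → TmT N n
  | al {n} : TmT N n → TmT N n
  | m {n} : TmT N n → TmT N n → TmT N n

/-- A word `w` over the alphabet applied to a term as a composite of unary symbols. -/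
def wApp {N n : ℕ} (w : List (Fin N)) (t : TmT N n) : TmT N n :=
  w.foldr (fun x s => TmT.g x s) t

/-- Equational provability in the theory `T` with axioms `u_i(x1) = v_i(x1)` (for `i : Fin M`,
where `u_i = ur i`, `v_i = vr i`) and `m(uα(x1), x2) = m(vα(x2), x1)`, closed under
all substitution instances and congruence. -/
inductive ProvT {N : ℕ} (M : ℕ) (ur vr : Fin M → List (Fin N)) (u v : List (Fin N)) :
    {n : ℕ} → TmT N n → TmT N n → Prop
  | refl {n} (t : TmT N n) : ProvT M ur vr u v t t
  | symm {n} {s t : TmT N n} : ProvT M ur vr u v s t → ProvT M ur vr u v t s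
  | trans {n} {s t w : TmT N n} :
      ProvT M ur vr u v s t → ProvT M ur vr u v t w → ProvT M ur vr u v s w
  | congg {n} (x : Fin N) {s t : TmT N n} :
      ProvT M ur vr u v s t → ProvT M ur vr u v (.g x s) (.g x t)
  | congal {n} {s t : TmT N n} : ProvT M ur vr u v s t → ProvT M ur vr u v (.al s) (.al t)
  | congm {n} {a a' b b' : TmT N n} : ProvT M ur vr u v a a' → ProvT M ur vr u v b b' →
      ProvT M ur vr u v (.m a b) (.m a' b')
  | axu {n} (i : Fin M) (t : TmT N n) : ProvT M ur vr u v (wApp (ur i) t) (wApp (vr i) t)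
  | axm {n} (t₁ t₂ : TmT N n) :
      ProvT M ur vr u v (.m (wApp u (.al t₁)) t₂) (.m (wApp v (.al t₂)) t₁)

/- The map `t ↦ t̂` from terms of `T` to special terms: variables are fixed, unary
symbols are erased, `m(wα(t₁),t₂) ↦ m(uα(t̂₁),t̂₂)` when `T ⊢ u(x) = w(x)`,
`m(wα(t₁),t₂) ↦ m(vα(t̂₁),t̂₂)` when `T ⊢ v(x) = w(x)` and `T ⊬ u(x) = v(x)`,
and `m(t₁,t₂) ↦ m(t̂₁,t̂₂)` otherwise.  (Note that `t̂₁` equals the hat of the core of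
`wα(t₁)`, since the hat map erases unary symbols.) -/
open Classical in
noncomputable def hatT {N M : ℕ} (ur vr : Fin M → List (Fin N)) (u v : List (Fin N)) :
    {n : ℕ} → TmT N n → TmT N n
  | _, .var i => .var i
  | _, .g _ t => hatT ur vr u v t
  | _, .al t => hatT ur vr u v t
  | _, .m t₁ t₂ =>
      if (∃ w : List (Fin N), (∃ s, t₁ = wApp w (.al s)) ∧
            ProvT M ur vr u v (wApp u (TmT.var (0 : Fin 1))) (wApp w (TmT.var 0))) then
        .m (wApp u (.al (hatT ur vr u v t₁))) (hatT ur vr u v t₂)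
      else if (∃ w : List (Fin N), (∃ s, t₁ = wApp w (.al s)) ∧
            ProvT M ur vr u v (wApp v (TmT.var (0 : Fin 1))) (wApp w (TmT.var 0))) ∧
            ¬ ProvT M ur vr u v (wApp u (TmT.var (0 : Fin 1))) (wApp v (TmT.var 0)) then
        .m (wApp v (.al (hatT ur vr u v t₁))) (hatT ur vr u v t₂)
      else .m (hatT ur vr u v t₁) (hatT ur vr u v t₂)


/-!
Induction on the derivation of `t = t'`. Since the hat map erases unary symbols, the axioms
`u_i(x) = v_i(x)` become trivial. At a node `m(a, b)` the branch taken depends only on whether `a`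
has the form `wα(s)` and on the provable-equality class of the word `w`; both are invariants of
provable equality, so congruence for `m` is preserved. Finally, the hat of the axiom
`m(uα(x₁), x₂) = m(vα(x₂), x₁)` is an instance of the same axiom, followed by `vα(x₂) = uα(x₂)` when
`T ⊢ u(x) = v(x)`.
-/

namespace Option.Rel

variable {α β γ δ : Type*}

lemma refl_of {r : α → α → Prop} (h : ∀ a, r a a) : ∀ o : Option α, Option.Rel r o o
  | .none => .none
  | .some a => .some (h a)

lemma symm_of {r : α → α → Prop} (h : ∀ {a b}, r a b → r b a) {o o' : Option α} :
    Option.Rel r o o' → Option.Rel r o' o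
  | .none => .none
  | .some hab => .some (h hab)

lemma trans_of {r : α → α → Prop} (h : ∀ {a b c}, r a b → r b c → r a c)
    {o o' o'' : Option α} : Option.Rel r o o' → Option.Rel r o' o'' → Option.Rel r o o''
  | .none, .none => .none
  | .some hab, .some hbc => .some (h hab hbc)

lemma map {r : α → β → Prop} {s : γ → δ → Prop} {f : α → γ} {g : β → δ}
    (h : ∀ {a b}, r a b → s (f a) (g b)) {o : Option α} {o' : Option β} :
    Option.Rel r o o' → Option.Rel s (o.map f) (o'.map g)
  | .none => .none
  | .some hab => .some (h hab)

end Option.Rel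

lemma wApp_append {N n : ℕ} (a b : List (Fin N)) (t : TmT N n) :
    wApp (a ++ b) t = wApp a (wApp b t) :=
  List.foldr_append

lemma wApp_cons {N n : ℕ} (x : Fin N) (w : List (Fin N)) (t : TmT N n) :
    wApp (x :: w) t = .g x (wApp w t) :=
  rfl

namespace TmT

variable {N : ℕ}

def subst : {n k : ℕ} → (Fin n → TmT N k) → TmT N n → TmT N k
  | _, _, σ, .var i => σ i
  | _, _, σ, .g x t => .g x (subst σ t)
  | _, _, σ, .al t => .al (subst σ t)
  | _, _, σ, .m a b => .m (subst σ a) (subst σ b)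

lemma subst_wApp {n k : ℕ} (σ : Fin n → TmT N k) (w : List (Fin N)) (t : TmT N n) :
    subst σ (wApp w t) = wApp w (subst σ t) := by
  induction w with
  | nil => rfl
  | cons x w ih => rw [wApp_cons, subst, ih, wApp_cons]

def alWord : {n : ℕ} → TmT N n → Option (List (Fin N))
  | _, .g x t => (alWord t).map (x :: ·)
  | _, .al _ => some []
  | _, .var _ => none
  | _, .m _ _ => none

lemma alWord_wApp {n : ℕ} (w : List (Fin N)) (t : TmT N n) :
    alWord (wApp w t) = (alWord t).map (w ++ ·) := by
  induction w with
  | nil => simp [wApp]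
  | cons x w ih => simp [wApp_cons, alWord, ih, Option.map_map, Function.comp_def]

lemma alWord_eq_some_iff {n : ℕ} {t : TmT N n} {w : List (Fin N)} :
    alWord t = some w ↔ ∃ s, t = wApp w (.al s) := by
  constructor
  · induction t generalizing w with
    | g x t ih =>
        simp only [alWord, Option.map_eq_some_iff]
        rintro ⟨w, hw, rfl⟩
        obtain ⟨s, rfl⟩ := ih hw
        exact ⟨s, rfl⟩
    | al s =>
        simp only [alWord, Option.some.injEq]
        rintro rfl
        exact ⟨s, rfl⟩
    | var | m => simp [alWord]
  · rintro ⟨s, rfl⟩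
    simp [alWord_wApp, alWord]

end TmT

section Provability

variable {N M : ℕ} {ur vr : Fin M → List (Fin N)} {u v : List (Fin N)}

/-- `T ⊢ w(x) = w'(x)`. -/
def WordProv (M : ℕ) (ur vr : Fin M → List (Fin N)) (u v w w' : List (Fin N)) : Prop :=
  ProvT M ur vr u v (wApp w (TmT.var (0 : Fin 1))) (wApp w' (TmT.var 0))

namespace ProvT

lemma subst {n k : ℕ} {s t : TmT N n} (h : ProvT M ur vr u v s t) (σ : Fin n → TmT N k) :
    ProvT M ur vr u v (s.subst σ) (t.subst σ) := by
  induction h with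
  | refl t => exact .refl _
  | symm _ ih => exact ih.symm
  | trans _ _ ih₁ ih₂ => exact ih₁.trans ih₂
  | congg x _ ih => simpa only [TmT.subst] using ih.congg x
  | congal _ ih => simpa only [TmT.subst] using ih.congal
  | congm _ _ ih₁ ih₂ => simpa only [TmT.subst] using ih₁.congm ih₂
  | axu i t =>
      rw [TmT.subst_wApp, TmT.subst_wApp]
      exact .axu i _
  | axm t₁ t₂ =>
      simp only [TmT.subst, TmT.subst_wApp]
      exact .axm _ _

lemma congWApp {n : ℕ} {s t : TmT N n} (w : List (Fin N)) (h : ProvT M ur vr u v s t) :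
    ProvT M ur vr u v (wApp w s) (wApp w t) := by
  induction w with
  | nil => exact h
  | cons x w ih => exact ih.congg x

lemma of_wordProv {n : ℕ} {w w' : List (Fin N)} (h : WordProv M ur vr u v w w')
    (t : TmT N n) : ProvT M ur vr u v (wApp w t) (wApp w' t) := by
  simpa only [TmT.subst_wApp, TmT.subst] using h.subst fun _ => t

lemma alWord_rel {n : ℕ} {t t' : TmT N n} (h : ProvT M ur vr u v t t') :
    Option.Rel (WordProv M ur vr u v) t.alWord t'.alWord := by
  induction h with
  | refl t => exact .refl_of (fun _ => .refl _) _
  | symm _ ih => exact ih.symm_of ProvT.symm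
  | trans _ _ ih₁ ih₂ => exact ih₁.trans_of ProvT.trans ih₂
  | congg x _ ih =>
      simp only [TmT.alWord]
      exact ih.map (f := (x :: ·)) (g := (x :: ·)) (ProvT.congg x)
  | congal =>
      simp only [TmT.alWord]
      exact .some (ProvT.refl _)
  | congm =>
      simp only [TmT.alWord]
      exact .none
  | axu i t =>
      simp only [TmT.alWord_wApp]
      refine (Option.Rel.refl_of (r := Eq) (fun _ => rfl) t.alWord).map ?_
      rintro w _ rfl
      simpa only [WordProv, wApp_append] using ProvT.axu i _
  | axm =>
      simp only [TmT.alWord]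
      exact .none

end ProvT

def HeadWordProv (M : ℕ) (ur vr : Fin M → List (Fin N)) (u v c : List (Fin N)) {n : ℕ}
    (a : TmT N n) : Prop :=
  ∃ w : List (Fin N), (∃ s, a = wApp w (.al s)) ∧ WordProv M ur vr u v c w

lemma headWordProv_iff_alWord {n : ℕ} (c : List (Fin N)) (a : TmT N n) :
    HeadWordProv M ur vr u v c a ↔ ∃ w, a.alWord = some w ∧ WordProv M ur vr u v c w := by
  simp only [HeadWordProv, TmT.alWord_eq_some_iff]

lemma headWordProv_wApp_al {n : ℕ} (c w : List (Fin N)) (s : TmT N n) :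
    HeadWordProv M ur vr u v c (wApp w (.al s)) ↔ WordProv M ur vr u v c w := by
  simp [headWordProv_iff_alWord, TmT.alWord_wApp, TmT.alWord]

lemma ProvT.headWordProv_iff {n : ℕ} {a a' : TmT N n} (h : ProvT M ur vr u v a a')
    (c : List (Fin N)) : HeadWordProv M ur vr u v c a ↔ HeadWordProv M ur vr u v c a' := by
  have hr := h.alWord_rel
  simp only [headWordProv_iff_alWord]
  generalize a.alWord = o, a'.alWord = o' at hr
  cases hr with
  | none => simp
  | some hw => simpa using ⟨fun hc => hc.trans hw, fun hc => hc.trans hw.symm⟩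

lemma hatT_wApp {n : ℕ} (w : List (Fin N)) (t : TmT N n) :
    hatT ur vr u v (wApp w t) = hatT ur vr u v t := by
  induction w with
  | nil => rfl
  | cons x w ih => rw [wApp_cons, hatT, ih]

open Classical in
lemma hatT_m {n : ℕ} (a b : TmT N n) :
    hatT ur vr u v (.m a b) =
      if HeadWordProv M ur vr u v u a then
        .m (wApp u (.al (hatT ur vr u v a))) (hatT ur vr u v b)
      else if HeadWordProv M ur vr u v v a ∧ ¬ WordProv M ur vr u v u v then
        .m (wApp v (.al (hatT ur vr u v a))) (hatT ur vr u v b)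
      else .m (hatT ur vr u v a) (hatT ur vr u v b) := by
  rw [hatT]
  rfl

lemma ProvT.hatT_m_congr {n : ℕ} {a a' b b' : TmT N n} (ha : ProvT M ur vr u v a a')
    (iha : ProvT M ur vr u v (hatT ur vr u v a) (hatT ur vr u v a'))
    (ihb : ProvT M ur vr u v (hatT ur vr u v b) (hatT ur vr u v b')) :
    ProvT M ur vr u v (hatT ur vr u v (.m a b)) (hatT ur vr u v (.m a' b')) := by
  rw [hatT_m, hatT_m, ha.headWordProv_iff, ha.headWordProv_iff]
  split_ifs
  · exact .congm (iha.congal.congWApp u) ihb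
  · exact .congm (iha.congal.congWApp v) ihb
  · exact .congm iha ihb

lemma provT_hatT_axm {n : ℕ} (t₁ t₂ : TmT N n) :
    ProvT M ur vr u v (hatT ur vr u v (.m (wApp u (.al t₁)) t₂))
      (hatT ur vr u v (.m (wApp v (.al t₂)) t₁)) := by
  have huu : WordProv M ur vr u v u u := ProvT.refl _
  rw [hatT_m, hatT_m, if_pos ((headWordProv_wApp_al u u t₁).2 huu), headWordProv_wApp_al,
    headWordProv_wApp_al]
  simp only [hatT_wApp, hatT]
  by_cases huv : WordProv M ur vr u v u v
  · rw [if_pos huv]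
    exact (ProvT.axm _ _).trans (.congm (ProvT.of_wordProv huv _).symm (.refl _))
  · rw [if_neg huv, if_pos ⟨ProvT.refl _, huv⟩]
    exact .axm _ _

end Provability

/-- The map `t ↦ t̂` preserves provable equality: if `T ⊢ t = t'`
then `T ⊢ t̂ = t̂'`. -/
theorem hat_preserves_provability {N M : ℕ} (ur vr : Fin M → List (Fin N))
    (u v : List (Fin N)) :
    ∀ (n : ℕ) (t t' : TmT N n), ProvT M ur vr u v t t' →
      ProvT M ur vr u v (hatT ur vr u v t) (hatT ur vr u v t') := by
  intro n t t' h
  induction h with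
  | refl t => exact .refl _
  | symm _ ih => exact ih.symm
  | trans _ _ ih₁ ih₂ => exact ih₁.trans ih₂
  | congg x _ ih => simpa only [hatT] using ih
  | congal _ ih => simpa only [hatT] using ih
  | congm ha _ iha ihb => exact ha.hatT_m_congr iha ihb
  | axu i t =>
      rw [hatT_wApp, hatT_wApp]
      exact .refl _
  | axm t₁ t₂ => exact provT_hatT_axm t₁ t₂
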